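/- arXiv:2101.01233 — 2 statements merged into one kernel-verified Lean document; each statement's English description precedes it below -/
import Mathlib

section
/- Let h : (0,1) → ℝ be non-increasing with ∫_0^1 h(t) dt = 0, and suppose that for every a ∈ (0,1), a·h(a) ≤ ∫_0^a h ≤ F(a) and (1−a)·h(a) ≥ ∫_a^1 h ≥ −F(a), where F(s) = Φ'(Φ^{-1}(s)) with Φ(x) = (4π)^{-1/2} ∫_{-∞}^x e^{-y²/4} dy. Then there is a universal constant C such that h(a) ≤ C(−log a)^{1/2} and h(1−a) ≥ −C(−log a)^{1/2} for all a ∈ (0, 1/4). -/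
/-!
Writing `Φ` for the cdf of the centred Gaussian of variance 2 and `φ = Φ'` for its density,
`F(Φ x) = φ x`, and `F(1 - s) = F s` because `φ` is even and `Φ(-x) = 1 - Φ x`. For `s = Φ x ≤ 1/4`
we have `x ≤ 0`, and two tail estimates give `F s ≲ s √(-log s)`: a lower bound for `Φ x` by the
mass of `φ` on an interval of length `1/(1 - x)` left of `x` gives `φ x ≲ (1 - x) Φ x`, and the
Chernoff bound `Φ x ≤ exp (-x²/4)` gives `-x ≤ 2 √(-log s)`. The hypotheses on `h` then yield
`a h(a) ≤ F a` and `a h(1 - a) ≥ -F(1 - a) = -F a`.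
-/

open MeasureTheory ProbabilityTheory Real Set
open scoped NNReal

namespace ProbabilityTheory

variable {μ : ℝ} {v : ℝ≥0}

lemma continuous_gaussianPDFReal (μ : ℝ) (v : ℝ≥0) : Continuous (gaussianPDFReal μ v) := by
  rw [gaussianPDFReal_def]
  fun_prop

lemma gaussianPDFReal_zero_neg (v : ℝ≥0) (x : ℝ) :
    gaussianPDFReal 0 v (-x) = gaussianPDFReal 0 v x := by
  simp [gaussianPDFReal]

lemma monotoneOn_gaussianPDFReal (μ : ℝ) (v : ℝ≥0) : MonotoneOn (gaussianPDFReal μ v) (Iic μ) := by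
  intro a ha b hb hab
  simp only [gaussianPDFReal]
  gcongr _ * exp ?_
  exact div_le_div_of_nonneg_right (by nlinarith [mem_Iic.1 ha, mem_Iic.1 hb]) (by positivity)

lemma cdf_gaussianReal_eq_integral (hv : v ≠ 0) (x : ℝ) :
    cdf (gaussianReal μ v) x = ∫ y in Iic x, gaussianPDFReal μ v y := by
  rw [cdf_eq_real, measureReal_def, gaussianReal_apply_eq_integral μ hv, ENNReal.toReal_ofReal
    (setIntegral_nonneg measurableSet_Iic fun y _ => gaussianPDFReal_nonneg μ v y)]

lemma cdf_gaussianReal_zero_two (x : ℝ) :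
    cdf (gaussianReal 0 2) x = (√(4 * π))⁻¹ * ∫ y in Iic x, exp (-y ^ 2 / 4) := by
  rw [cdf_gaussianReal_eq_integral two_ne_zero, ← integral_const_mul]
  congr 1 with y
  simp only [gaussianPDFReal, NNReal.coe_ofNat, sub_zero]
  rw [show 2 * π * 2 = 4 * π by ring, show (2 : ℝ) * 2 = 4 by norm_num]

lemma hasDerivAt_cdf_gaussianReal (hv : v ≠ 0) (x : ℝ) :
    HasDerivAt (cdf (gaussianReal μ v)) (gaussianPDFReal μ v x) x := by
  have hint (a : ℝ) : IntegrableOn (gaussianPDFReal μ v) (Iic a) :=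
    (integrable_gaussianPDFReal μ v).integrableOn
  have hsplit : (cdf (gaussianReal μ v) : ℝ → ℝ) = fun x =>
      (∫ y in Iic 0, gaussianPDFReal μ v y) + ∫ y in (0 : ℝ)..x, gaussianPDFReal μ v y := by
    funext x
    rw [cdf_gaussianReal_eq_integral hv, ← intervalIntegral.integral_Iic_sub_Iic (hint 0) (hint x)]
    ring
  rw [hsplit]
  exact ((continuous_gaussianPDFReal μ v).integral_hasStrictDerivAt 0 x).hasDerivAt.const_add _

lemma continuous_cdf_gaussianReal (hv : v ≠ 0) : Continuous (cdf (gaussianReal μ v)) :=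
  continuous_iff_continuousAt.2 fun x => (hasDerivAt_cdf_gaussianReal hv x).continuousAt

lemma strictMono_cdf_gaussianReal (hv : v ≠ 0) : StrictMono (cdf (gaussianReal μ v)) :=
  strictMono_of_hasDerivAt_pos (hasDerivAt_cdf_gaussianReal hv) (gaussianPDFReal_pos μ v · hv)

lemma Ioo_subset_range_cdf {ν : Measure ℝ} (hc : Continuous (cdf ν)) :
    Ioo 0 1 ⊆ range (cdf ν) := fun _ hb =>
  mem_range_of_exists_le_of_exists_ge hc
    ((tendsto_cdf_atBot ν).eventually (ge_mem_nhds hb.1)).exists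
    ((tendsto_cdf_atTop ν).eventually (le_mem_nhds hb.2)).exists

lemma cdf_gaussianReal_neg (hv : v ≠ 0) (x : ℝ) :
    cdf (gaussianReal 0 v) (-x) = 1 - cdf (gaussianReal 0 v) x := by
  have hint := integrable_gaussianPDFReal 0 v
  rw [cdf_gaussianReal_eq_integral hv, cdf_gaussianReal_eq_integral hv, ← integral_comp_neg_Ioi x]
  simp only [gaussianPDFReal_zero_neg]
  rw [eq_sub_iff_add_eq', intervalIntegral.integral_Iic_add_Ioi hint.integrableOn hint.integrableOn,
    integral_gaussianPDFReal_eq_one 0 hv]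

lemma cdf_gaussianReal_le_exp (hv : v ≠ 0) {x : ℝ} (hx : x ≤ μ) :
    cdf (gaussianReal μ v) x ≤ exp (-(x - μ) ^ 2 / (2 * v)) := by
  have hv' : (0 : ℝ) < v := by positivity
  have hbound := measure_le_le_exp_mul_mgf (μ := gaussianReal μ v) (X := id) x
    (div_nonpos_of_nonpos_of_nonneg (sub_nonpos.2 hx) hv'.le) (integrable_exp_mul_gaussianReal _)
  have hexponent : -((x - μ) / v) * x + (μ * ((x - μ) / v) + v * ((x - μ) / v) ^ 2 / 2)
      = -(x - μ) ^ 2 / (2 * v) := by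
    field_simp
    ring
  rw [mgf_id_gaussianReal, ← exp_add, hexponent] at hbound
  rwa [cdf_eq_real]

lemma mul_gaussianPDFReal_le_cdf (hv : v ≠ 0) {x δ : ℝ} (hx : x ≤ μ) (hδ : 0 ≤ δ) :
    δ * gaussianPDFReal μ v (x - δ) ≤ cdf (gaussianReal μ v) x := by
  have hint := integrable_gaussianPDFReal μ v
  rw [cdf_gaussianReal_eq_integral hv]
  calc δ * gaussianPDFReal μ v (x - δ)
      = ∫ _ in Ioc (x - δ) x, gaussianPDFReal μ v (x - δ) := by
        rw [setIntegral_const, Real.volume_real_Ioc_of_le (by linarith), smul_eq_mul]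
        ring
    _ ≤ ∫ y in Ioc (x - δ) x, gaussianPDFReal μ v y :=
        setIntegral_mono_on (integrableOn_const (by simp)) hint.integrableOn measurableSet_Ioc
          fun y hy => monotoneOn_gaussianPDFReal μ v (mem_Iic.2 (by linarith)) (hy.2.trans hx) hy.1.le
    _ ≤ ∫ y in Iic x, gaussianPDFReal μ v y :=
        setIntegral_mono_set hint.integrableOn (ae_of_all _ (gaussianPDFReal_nonneg μ v))
          (ae_of_all _ Ioc_subset_Iic_self)

lemma gaussianPDFReal_le_mul_cdf (hv : v ≠ 0) {x : ℝ} (hx : x ≤ 0) :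
    gaussianPDFReal 0 v x ≤ exp (1 / v) * (1 - x) * cdf (gaussianReal 0 v) x := by
  set δ := (1 - x)⁻¹
  have hδ_pos : 0 < δ := inv_pos.2 (by linarith)
  have hδ_le : δ ≤ 1 := inv_le_one_of_one_le₀ (by linarith)
  have hδ_mul : δ * (1 - x) = 1 := inv_mul_cancel₀ (by linarith)
  have hshift : gaussianPDFReal 0 v x ≤ exp (1 / v) * gaussianPDFReal 0 v (x - δ) := by
    simp only [gaussianPDFReal, sub_zero]
    rw [mul_left_comm, ← exp_add]
    gcongr _ * exp ?_
    calc -x ^ 2 / (2 * v) ≤ (2 - (x - δ) ^ 2) / (2 * v) :=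
          div_le_div_of_nonneg_right (by nlinarith) (by positivity)
      _ = 1 / v + -(x - δ) ^ 2 / (2 * v) := by
          have : (v : ℝ) ≠ 0 := by positivity
          field_simp
          ring
  calc gaussianPDFReal 0 v x ≤ exp (1 / v) * gaussianPDFReal 0 v (x - δ) := hshift
    _ = exp (1 / v) * (1 - x) * (δ * gaussianPDFReal 0 v (x - δ)) := by
        rw [mul_assoc _ (1 - x), ← mul_assoc (1 - x), mul_comm (1 - x), hδ_mul, one_mul]
    _ ≤ exp (1 / v) * (1 - x) * cdf (gaussianReal 0 v) x :=
        mul_le_mul_of_nonneg_left (mul_gaussianPDFReal_le_cdf hv hx hδ_pos.le)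
          (mul_nonneg (exp_pos _).le (by linarith))

noncomputable def gaussianIsoperimetricProfile (v : ℝ≥0) (s : ℝ) : ℝ :=
  deriv (cdf (gaussianReal 0 v)) (Function.invFun (cdf (gaussianReal 0 v)) s)

lemma gaussianIsoperimetricProfile_cdf (hv : v ≠ 0) (x : ℝ) :
    gaussianIsoperimetricProfile v (cdf (gaussianReal 0 v) x) = gaussianPDFReal 0 v x := by
  rw [gaussianIsoperimetricProfile,
    Function.leftInverse_invFun (strictMono_cdf_gaussianReal hv).injective x,
    (hasDerivAt_cdf_gaussianReal hv x).deriv]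

lemma gaussianIsoperimetricProfile_one_sub (hv : v ≠ 0) {b : ℝ} (hb : b ∈ Ioo 0 1) :
    gaussianIsoperimetricProfile v (1 - b) = gaussianIsoperimetricProfile v b := by
  obtain ⟨x, rfl⟩ := Ioo_subset_range_cdf (continuous_cdf_gaussianReal (μ := 0) hv) hb
  rw [← cdf_gaussianReal_neg hv, gaussianIsoperimetricProfile_cdf hv,
    gaussianIsoperimetricProfile_cdf hv, gaussianPDFReal_zero_neg]

lemma gaussianIsoperimetricProfile_le (hv : v ≠ 0) {b : ℝ} (hb₀ : 0 < b) (hb : b ≤ exp (-1)) :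
    gaussianIsoperimetricProfile v b ≤ exp (1 / v) * (1 + √(2 * v)) * (b * √(-log b)) := by
  have he : exp (-1) < 1 / 2 := by
    rw [exp_neg, inv_lt_comm₀ (exp_pos 1) (by norm_num)]
    linarith [exp_one_gt_d9]
  obtain ⟨x, rfl⟩ := Ioo_subset_range_cdf (continuous_cdf_gaussianReal (μ := 0) hv) ⟨hb₀, by linarith⟩
  have hx : x ≤ 0 := by
    by_contra! hx
    have hmid := cdf_gaussianReal_neg hv 0
    rw [neg_zero] at hmid
    linarith [strictMono_cdf_gaussianReal (μ := 0) hv hx]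
  set b := cdf (gaussianReal 0 v) x
  have hlog : 1 ≤ -log b := by linarith [(log_le_log hb₀ hb).trans_eq (log_exp _)]
  have hchernoff : x ^ 2 ≤ 2 * v * -log b := by
    have := (log_le_log hb₀ (cdf_gaussianReal_le_exp hv hx)).trans_eq (log_exp _)
    rw [sub_zero, neg_div, le_neg, div_le_iff₀' (by positivity)] at this
    exact this
  have htail : -x ≤ √(2 * v) * √(-log b) := by
    rw [← sqrt_mul (by positivity)]
    exact (le_sqrt (by linarith) (by positivity)).2 (by nlinarith)
  have hsqrt : 1 ≤ √(-log b) := one_le_sqrt.2 hlog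
  calc gaussianIsoperimetricProfile v b = gaussianPDFReal 0 v x :=
        gaussianIsoperimetricProfile_cdf hv x
    _ ≤ exp (1 / v) * (1 - x) * b := gaussianPDFReal_le_mul_cdf hv hx
    _ ≤ exp (1 / v) * ((1 + √(2 * v)) * √(-log b)) * b := by gcongr; nlinarith
    _ = exp (1 / v) * (1 + √(2 * v)) * (b * √(-log b)) := by ring

end ProbabilityTheory

/-- If h is non-increasing on (0,1) with total integral 0 and satisfies
a·h(a) ≤ ∫_0^a h ≤ F(a) and −F(a) ≤ ∫_a^1 h ≤ (1−a)·h(a), where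
F(s) = Φ'(Φ⁻¹(s)), then h(a) ≤ C√(−log a) and h(1−a) ≥ −C√(−log a)
for a ∈ (0,1/4) with a universal constant C. -/
theorem rearrangement_log_bound
    (Φ : ℝ → ℝ)
    (hΦ : ∀ x : ℝ, Φ x = (Real.sqrt (4 * Real.pi))⁻¹ * ∫ y in Set.Iic x, Real.exp (-y ^ 2 / 4))
    (F : ℝ → ℝ) (hF : ∀ s : ℝ, F s = deriv Φ (Function.invFun Φ s)) :
    ∃ C : ℝ, 0 < C ∧ ∀ h : ℝ → ℝ, AntitoneOn h (Set.Ioo (0:ℝ) 1) →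
      (∫ t in (0:ℝ)..1, h t) = 0 →
      (∀ a ∈ Set.Ioo (0:ℝ) 1,
        a * h a ≤ (∫ t in (0:ℝ)..a, h t) ∧ (∫ t in (0:ℝ)..a, h t) ≤ F a ∧
        -(F a) ≤ (∫ t in a..(1:ℝ), h t) ∧ (∫ t in a..(1:ℝ), h t) ≤ (1 - a) * h a) →
      ∀ a ∈ Set.Ioo (0:ℝ) (1/4),
        h a ≤ C * Real.sqrt (-Real.log a) ∧ -(C * Real.sqrt (-Real.log a)) ≤ h (1 - a) := by
  obtain rfl : Φ = cdf (gaussianReal 0 2) :=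
    funext fun x => (hΦ x).trans (cdf_gaussianReal_zero_two x).symm
  obtain rfl : F = gaussianIsoperimetricProfile 2 := funext hF
  refine ⟨exp (1 / (2 : ℝ≥0)) * (1 + √(2 * (2 : ℝ≥0))), by positivity, fun h _ _ hh a ha => ?_⟩
  have ha₁ : a ∈ Ioo (0 : ℝ) 1 := ⟨ha.1, by linarith [ha.2]⟩
  have hquarter : (1 / 4 : ℝ) ≤ exp (-1) := by
    rw [exp_neg, le_inv_comm₀ (by norm_num) (exp_pos 1)]
    linarith [exp_one_lt_d9]
  have hprofile := gaussianIsoperimetricProfile_le two_ne_zero ha.1 (ha.2.le.trans hquarter)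
  obtain ⟨hleft, hleft_le, -, -⟩ := hh a ha₁
  obtain ⟨-, -, hright_ge, hright⟩ := hh (1 - a) ⟨by linarith [ha₁.2], by linarith [ha₁.1]⟩
  rw [gaussianIsoperimetricProfile_one_sub two_ne_zero ha₁] at hright_ge
  rw [sub_sub_cancel] at hright
  exact ⟨le_of_mul_le_mul_left (by linarith) ha.1, le_of_mul_le_mul_left (by linarith) ha.1⟩
end

section
/- Let r : [τ₀ − r₀², τ₀ + r₀²] → (0, ∞) be a differentiable function of τ with r(τ₀) = r₀ ≤ c₀√τ₀ for some c₀ ∈ (0, 1/2), and suppose |d/dτ log(r(τ)/√τ)| ≤ C/τ whenever r(τ) < c₀√τ. If c₀ is small enough (depending only on C), then r(τ) ≥ (4/5) r₀ for all τ ∈ [τ₀ − r₀², τ₀ + r₀²]. -/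
/-!
Put `g τ = log (r τ / √τ)`. The bound `|g'| ≤ C/τ` is only available while `g < log c₀`, but
`g τ₀ ≤ log c₀`, and wherever `g` is above that threshold it is above `g τ₀` anyway; a barrier
argument therefore shows that `g` decreases at rate at most `2C/τ₀` away from `τ₀`. On the window
`|τ - τ₀| ≤ r₀² ≤ c₀² τ₀` this costs `2Cc₀²` in `g` and a factor `1 - c₀²` in `√τ`, so
`r τ ≥ (1 - 2Cc₀²)(1 - c₀²) r₀`, which is at least `4/5 r₀` once `(C + 1) c₀² ≤ 1/16`.
-/

open Set Real

section Barrier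

variable {g : ℝ → ℝ} {a b θ K : ℝ}

theorem sub_mul_le_image_of_abs_deriv_le_below (hK : 0 ≤ K)
    (hg : ∀ x ∈ Icc a b, DifferentiableAt ℝ g x)
    (hbound : ∀ x ∈ Icc a b, g x < θ → |deriv g x| ≤ K) (ha : g a ≤ θ) :
    ∀ x ∈ Icc a b, g a - K * (x - a) ≤ g x := by
  intro x hx
  -- The barrier `g a - ε - (K + ε) (y - a)` can only be touched where `g y < g a ≤ θ`.
  have hfence : ∀ ε > 0, g a - K * (x - a) - ε * (1 + (x - a)) ≤ g x := by
    intro ε hε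
    have := image_le_of_deriv_right_lt_deriv_boundary (f := fun y => -g y)
      (f' := fun y => -deriv g y) (B := fun y => (K + ε) * (y - a) + ε - g a)
      (B' := fun _ => K + ε)
      (fun y hy => (hg y hy).continuousAt.neg.continuousWithinAt)
      (fun y hy => (hg y (Ico_subset_Icc_self hy)).hasDerivAt.neg.hasDerivWithinAt)
      (by linarith)
      (fun y => by
        simpa using (((hasDerivAt_id y).sub_const a).const_mul (K + ε)).add_const (ε - g a))
      (fun y hy htouch => by
        have hlt : g y < θ := by nlinarith [hy.1]
        linarith [neg_abs_le (deriv g y), hbound y (Ico_subset_Icc_self hy) hlt])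
      hx
    linarith
  refine le_of_forall_pos_le_add fun ε hε => ?_
  have hlen : 0 < 1 + (x - a) := by linarith [hx.1]
  have := hfence (ε / (1 + (x - a))) (by positivity)
  rw [div_mul_cancel₀ _ hlen.ne'] at this
  linarith

theorem sub_mul_le_image_of_abs_deriv_le_below_left (hK : 0 ≤ K)
    (hg : ∀ x ∈ Icc a b, DifferentiableAt ℝ g x)
    (hbound : ∀ x ∈ Icc a b, g x < θ → |deriv g x| ≤ K) (hb : g b ≤ θ) :
    ∀ x ∈ Icc a b, g b - K * (b - x) ≤ g x := by
  intro x hx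
  have hneg : ∀ y ∈ Icc (-b) (-a), -y ∈ Icc a b := fun y hy =>
    ⟨by linarith [hy.2], by linarith [hy.1]⟩
  have := sub_mul_le_image_of_abs_deriv_le_below (g := fun y => g (-y)) (θ := θ) hK
    (fun y hy => (hg (-y) (hneg y hy)).comp y (hasDerivAt_neg y).differentiableAt)
    (fun y hy hlt => by simpa [deriv_comp_neg] using hbound (-y) (hneg y hy) hlt)
    (by simpa using hb) (-x) ⟨neg_le_neg hx.2, neg_le_neg hx.1⟩
  simp only [neg_neg] at this
  linarith

theorem sub_mul_abs_le_image_of_abs_deriv_le_below {p : ℝ} (hK : 0 ≤ K)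
    (hg : ∀ x ∈ Icc a b, DifferentiableAt ℝ g x)
    (hbound : ∀ x ∈ Icc a b, g x < θ → |deriv g x| ≤ K) (hp : p ∈ Icc a b) (hgp : g p ≤ θ) :
    ∀ x ∈ Icc a b, g p - K * |x - p| ≤ g x := by
  intro x hx
  rcases le_total x p with hxp | hpx
  · have hsub : Icc a p ⊆ Icc a b := Icc_subset_Icc_right hp.2
    rw [abs_of_nonpos (sub_nonpos.2 hxp), neg_sub]
    exact sub_mul_le_image_of_abs_deriv_le_below_left hK (fun y hy => hg y (hsub hy))
      (fun y hy => hbound y (hsub hy)) hgp x ⟨hx.1, hxp⟩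
  · have hsub : Icc p b ⊆ Icc a b := Icc_subset_Icc_left hp.1
    rw [abs_of_nonneg (sub_nonneg.2 hpx)]
    exact sub_mul_le_image_of_abs_deriv_le_below hK (fun y hy => hg y (hsub hy))
      (fun y hy => hbound y (hsub hy)) hgp x ⟨hpx, hx.2⟩

end Barrier

theorem log_div_sqrt_sub_mul_abs_le {r : ℝ → ℝ} {a b c K p : ℝ} (ha : 0 < a) (hK : 0 ≤ K)
    (hr : ∀ τ ∈ Icc a b, DifferentiableAt ℝ r τ ∧ 0 < r τ)
    (hbound : ∀ τ ∈ Icc a b, r τ < c * √τ → |deriv (fun s => log (r s / √s)) τ| ≤ K)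
    (hp : p ∈ Icc a b) (hrp : r p ≤ c * √p) :
    ∀ τ ∈ Icc a b, log (r p / √p) - K * |τ - p| ≤ log (r τ / √τ) := by
  have hsqrt : ∀ τ ∈ Icc a b, 0 < √τ := fun τ hτ => sqrt_pos.2 (ha.trans_le hτ.1)
  have hquot : ∀ τ ∈ Icc a b, 0 < r τ / √τ := fun τ hτ => div_pos (hr τ hτ).2 (hsqrt τ hτ)
  have hc : 0 < c := pos_of_mul_pos_left ((hr p hp).2.trans_le hrp) (hsqrt p hp).le
  refine sub_mul_abs_le_image_of_abs_deriv_le_below (θ := log c) hK (fun τ hτ => ?_)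
    (fun τ hτ hlt => hbound τ hτ ?_) hp ?_
  · exact ((hr τ hτ).1.div (hasDerivAt_sqrt (ha.trans_le hτ.1).ne').differentiableAt
      (hsqrt τ hτ).ne').log (hquot τ hτ).ne'
  · rwa [log_lt_log_iff (hquot τ hτ) hc, div_lt_iff₀ (hsqrt τ hτ)] at hlt
  · rwa [log_le_log_iff (hquot p hp) hc, div_le_iff₀ (hsqrt p hp)]

theorem mul_one_sub_le_of_log_sub_le_log {x y ε : ℝ} (hx : 0 < x) (hy : 0 < y)
    (h : log y - ε ≤ log x) : y * (1 - ε) ≤ x :=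
  calc y * (1 - ε) ≤ y * exp (-ε) := by gcongr; linarith [add_one_le_exp (-ε)]
    _ = exp (log y - ε) := by rw [sub_eq_add_neg, exp_add, exp_log hy]
    _ ≤ x := (exp_le_exp.2 h).trans_eq (exp_log hx)

theorem mul_one_sub_mul_one_sub_le_of_log_div_sqrt {x y σ τ ε η : ℝ} (hx : 0 < x) (hy : 0 < y)
    (hσ : 0 < σ) (hτ : 0 < τ) (hη₀ : 0 ≤ η) (hη₁ : η ≤ 1) (hτσ : (1 - η) * σ ≤ τ)
    (h : log (y / √σ) - ε ≤ log (x / √τ)) : y * (1 - ε) * (1 - η) ≤ x := by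
  have hsqrtσ : 0 < √σ := sqrt_pos.2 hσ
  have hsqrtτ : 0 < √τ := sqrt_pos.2 hτ
  have hratio : y / √σ * (1 - ε) ≤ x / √τ :=
    mul_one_sub_le_of_log_sub_le_log (div_pos hx hsqrtτ) (div_pos hy hsqrtσ) h
  have hsqrt : (1 - η) * √σ ≤ √τ := by
    rw [le_sqrt (by nlinarith) hτ.le, mul_pow, sq_sqrt hσ.le]
    nlinarith
  calc y * (1 - ε) * (1 - η) = y / √σ * (1 - ε) * ((1 - η) * √σ) := by field_simp
    _ ≤ x / √τ * √τ := mul_le_mul hratio hsqrt (by nlinarith) (div_pos hx hsqrtτ).le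
    _ = x := div_mul_cancel₀ _ hsqrtτ.ne'

theorem Icc_sub_sq_add_sq_subset {τ₀ r₀ c₀ : ℝ} (hτ₀ : 0 ≤ τ₀) (hr₀ : 0 ≤ r₀)
    (h : r₀ ≤ c₀ * √τ₀) :
    Icc (τ₀ - r₀ ^ 2) (τ₀ + r₀ ^ 2) ⊆ Icc ((1 - c₀ ^ 2) * τ₀) ((1 + c₀ ^ 2) * τ₀) := by
  have hsq : r₀ ^ 2 ≤ c₀ ^ 2 * τ₀ := by
    simpa [mul_pow, sq_sqrt hτ₀] using pow_le_pow_left₀ hr₀ h 2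
  exact Icc_subset_Icc (by linarith) (by linarith)

/-- Abstract time-direction scale comparability (Lemma 2.5): if
|d/dτ log(r(τ)/√τ)| ≤ C/τ wherever r(τ) < c₀√τ, and r(τ₀) = r₀ ≤ c₀√τ₀, then for c₀
small enough depending only on C, r(τ) ≥ (4/5) r₀ on [τ₀ − r₀², τ₀ + r₀²]. -/
theorem scale_comparability_in_time :
    ∀ C : ℝ, 0 < C → ∃ δ : ℝ, 0 < δ ∧
      ∀ c₀ ∈ Set.Ioo (0:ℝ) (1/2), c₀ ≤ δ →
      ∀ (τ₀ r₀ : ℝ) (r : ℝ → ℝ), 0 < τ₀ → 0 < r₀ →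
      (∀ τ ∈ Set.Icc (τ₀ - r₀ ^ 2) (τ₀ + r₀ ^ 2), DifferentiableAt ℝ r τ ∧ 0 < r τ) →
      r τ₀ = r₀ → r₀ ≤ c₀ * Real.sqrt τ₀ →
      (∀ τ ∈ Set.Icc (τ₀ - r₀ ^ 2) (τ₀ + r₀ ^ 2), r τ < c₀ * Real.sqrt τ →
        |deriv (fun s => Real.log (r s / Real.sqrt s)) τ| ≤ C / τ) →
      ∀ τ ∈ Set.Icc (τ₀ - r₀ ^ 2) (τ₀ + r₀ ^ 2), (4/5) * r₀ ≤ r τ := by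
  intro C hC
  refine ⟨1 / (4 * (C + 1)), by positivity, ?_⟩
  rintro c₀ ⟨hc₀, hc₀half⟩ hδ τ₀ r₀ r hτ₀ hr₀ hr hrτ₀ hr₀c₀ hderiv τ hτ
  have hwindow := Icc_sub_sq_add_sq_subset hτ₀.le hr₀.le hr₀c₀
  have hsmall : (C + 1) * c₀ ^ 2 ≤ 1 / 16 := by
    have : c₀ * (4 * (C + 1)) ≤ 1 := (le_div_iff₀ (by positivity)).1 hδ
    nlinarith
  have hhalf : ∀ s ∈ Icc (τ₀ - r₀ ^ 2) (τ₀ + r₀ ^ 2), τ₀ / 2 ≤ s := fun s hs => by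
    nlinarith [(hwindow hs).1]
  have hτ₀mem : τ₀ ∈ Icc (τ₀ - r₀ ^ 2) (τ₀ + r₀ ^ 2) :=
    ⟨sub_le_self _ (sq_nonneg r₀), le_add_of_nonneg_right (sq_nonneg r₀)⟩
  have hlog := log_div_sqrt_sub_mul_abs_le (K := 2 * C / τ₀)
    (by linarith [hhalf _ (left_mem_Icc.2 (hτ₀mem.1.trans hτ₀mem.2))]) (by positivity) hr
    (fun s hs hlt => (hderiv s hs hlt).trans <| by
      rw [div_le_div_iff₀ (by linarith [hhalf s hs]) hτ₀]
      nlinarith [hhalf s hs])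
    hτ₀mem (hrτ₀ ▸ hr₀c₀) τ hτ
  have hloss : 2 * C / τ₀ * |τ - τ₀| ≤ 2 * C * c₀ ^ 2 := by
    have hdist : |τ - τ₀| ≤ c₀ ^ 2 * τ₀ :=
      abs_sub_le_iff.2 ⟨by linarith [(hwindow hτ).2], by linarith [(hwindow hτ).1]⟩
    rw [div_mul_eq_mul_div, div_le_iff₀ hτ₀]
    nlinarith
  calc 4 / 5 * r₀ ≤ r₀ * (1 - 2 * C * c₀ ^ 2) * (1 - c₀ ^ 2) := by
        nlinarith [mul_nonneg (mul_nonneg hr₀.le hC.le) (pow_nonneg (sq_nonneg c₀) 2)]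
    _ ≤ r τ := mul_one_sub_mul_one_sub_le_of_log_div_sqrt (hr τ hτ).2 hr₀ hτ₀
        (by linarith [hhalf τ hτ]) (sq_nonneg c₀) (by nlinarith) (hwindow hτ).1
        (by rw [hrτ₀] at hlog; linarith)
end
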